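/- arXiv:2412.01314 — 2 statements merged into one kernel-verified Lean document; each statement's English description precedes it below -/
import Mathlib

section
/- Let A be a unital C*-algebra and let 0 < ε < 1/3. If u is an ε-unitary in A, then the 2×2 diagonal matrix diag(u, u*) in M₂(A) is connected to the identity I₂ by a norm-continuous path of 3ε-unitaries in M₂(A). -/
/-!
Write `diag(u, u*) = D E` with `D = diag(u, 1)` and `E = diag(1, u*)`. Conjugating `D` by the
rotations `R_t` moves its corner entry to the other diagonal slot, so `t ↦ R_t D R_t* E` runs
from `diag(u, u*)` to `diag(1, u u*)`, and the straight segment to `1` finishes the path.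
Unitary conjugation preserves the defects `‖x* x - 1‖` and `‖x x* - 1‖`, a product of
elements with defects below `p` and `q` has defect below `p + q + p q`, and `1 + y` with `y`
self-adjoint has defect at most `2 ‖y‖ + ‖y‖²`. So every point of the path has defect below
`2ε + ε² < 3ε`. The norm `m2CStarNorm` is the C*-norm of Mathlib's `CStarMatrix`.
-/

/-- The canonical C*-norm on 2×2 matrices over a unital C*-algebra `A`, given by
the operator norm for the action on the Hilbert A-module A². -/
noncomputable def m2CStarNorm {A : Type*} [CStarAlgebra A]
    (M : Matrix (Fin 2) (Fin 2) A) : ℝ :=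
  sSup ((fun v : Fin 2 → A =>
      Real.sqrt ‖∑ i, star (M.mulVec v i) * M.mulVec v i‖) ''
    {v : Fin 2 → A | ‖∑ i, star (v i) * v i‖ ≤ 1})

open CStarMatrix Matrix WithCStarModule
open scoped Matrix
open Real

section AlmostUnitary

variable {B : Type*} [NormedRing B] [StarRing B]

/-- The paper's `δ`-unitaries. -/
def IsAlmostUnitary (δ : ℝ) (x : B) : Prop :=
  ‖star x * x - 1‖ < δ ∧ ‖x * star x - 1‖ < δ

protected lemma IsAlmostUnitary.star {δ : ℝ} {x : B} (hx : IsAlmostUnitary δ x) :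
    IsAlmostUnitary δ (star x) := by
  rw [IsAlmostUnitary, star_star]
  exact hx.symm

lemma IsSelfAdjoint.isAlmostUnitary_one_add {δ : ℝ} {y : B} (hy : IsSelfAdjoint y)
    (h : ‖y‖ < δ) : IsAlmostUnitary (δ + δ + δ * δ) (1 + y) := by
  have hsa : star (1 + y) = 1 + y := by rw [star_add, star_one, hy.star_eq]
  have hb : ‖(1 + y) * (1 + y) - 1‖ < δ + δ + δ * δ :=
    calc ‖(1 + y) * (1 + y) - 1‖ = ‖y + y + y * y‖ := by congr 1; noncomm_ring
      _ ≤ ‖y‖ + ‖y‖ + ‖y‖ * ‖y‖ := by grw [norm_add_le, norm_add_le, norm_mul_le]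
      _ < δ + δ + δ * δ := by nlinarith [norm_nonneg y]
  rw [IsAlmostUnitary, hsa]
  exact ⟨hb, hb⟩

variable [CStarRing B]

lemma CStarRing.norm_one_le : ‖(1 : B)‖ ≤ 1 := by
  nontriviality B
  exact CStarRing.norm_one.le

lemma norm_star_mul_mul_self_sub_one_le (a b : B) :
    ‖star (a * b) * (a * b) - 1‖ ≤
      ‖star a * a - 1‖ * (1 + ‖star b * b - 1‖) + ‖star b * b - 1‖ := by
  have hb : ‖star b‖ * ‖b‖ ≤ 1 + ‖star b * b - 1‖ := by
    rw [norm_star, ← CStarRing.norm_star_mul_self]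
    calc ‖star b * b‖ = ‖1 + (star b * b - 1)‖ := by rw [add_sub_cancel]
      _ ≤ 1 + ‖star b * b - 1‖ := by grw [norm_add_le, CStarRing.norm_one_le]
  calc ‖star (a * b) * (a * b) - 1‖
        = ‖star b * (star a * a - 1) * b + (star b * b - 1)‖ := by
          congr 1; rw [star_mul]; noncomm_ring
    _ ≤ ‖star b‖ * ‖star a * a - 1‖ * ‖b‖ + ‖star b * b - 1‖ := by
        grw [norm_add_le, norm_mul_le, norm_mul_le]
    _ ≤ ‖star a * a - 1‖ * (1 + ‖star b * b - 1‖) + ‖star b * b - 1‖ := by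
        nlinarith [norm_nonneg (star a * a - 1)]

lemma IsAlmostUnitary.mul {p q : ℝ} {a b : B} (ha : IsAlmostUnitary p a)
    (hb : IsAlmostUnitary q b) : IsAlmostUnitary (p + q + p * q) (a * b) := by
  have key {p q : ℝ} {a b : B} (ha : ‖star a * a - 1‖ < p) (hb : ‖star b * b - 1‖ < q) :
      ‖star (a * b) * (a * b) - 1‖ < p + q + p * q := by
    refine (norm_star_mul_mul_self_sub_one_le a b).trans_lt ?_
    nlinarith [norm_nonneg (star a * a - 1), norm_nonneg (star b * b - 1)]
  refine ⟨key ha.1 hb.1, ?_⟩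
  have := key hb.star.1 ha.star.1
  rwa [← star_mul, star_star, add_comm q, mul_comm q] at this

lemma norm_star_mul_self_sub_one_unitary_conj {x U : B} (hU : U ∈ unitary B) :
    ‖star (U * x * star U) * (U * x * star U) - 1‖ = ‖star x * x - 1‖ := by
  have key : star (U * x * star U) * (U * x * star U) - 1 = U * (star x * x - 1) * star U :=
    calc star (U * x * star U) * (U * x * star U) - 1
        = U * star x * (star U * U) * x * star U - U * star U := by
          simp only [star_mul, star_star, mul_assoc, Unitary.mul_star_self_of_mem hU]
      _ = U * (star x * x - 1) * star U := by
          rw [Unitary.star_mul_self_of_mem hU]; noncomm_ring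
  rw [key, CStarRing.norm_mul_mem_unitary _ (Unitary.star_mem hU),
    CStarRing.norm_mem_unitary_mul _ hU]

lemma IsAlmostUnitary.unitary_conj {δ : ℝ} {x U : B} (hU : U ∈ unitary B)
    (hx : IsAlmostUnitary δ x) : IsAlmostUnitary δ (U * x * star U) := by
  refine ⟨(norm_star_mul_self_sub_one_unitary_conj hU).trans_lt hx.1, ?_⟩
  have hstar : star (U * x * star U) = U * star x * star U := by simp [mul_assoc]
  have := norm_star_mul_self_sub_one_unitary_conj (x := star x) hU
  rw [← hstar, star_star, star_star] at this
  exact this.trans_lt hx.2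

end AlmostUnitary

lemma cos_smul_one_add_sin_smul_mem_unitary {B : Type*} [Ring B] [StarRing B] [Algebra ℝ B]
    [StarModule ℝ B] {J : B} (hJ : star J = -J) (hJJ : J * J = -1) (θ : ℝ) :
    cos θ • 1 + sin θ • J ∈ unitary B := by
  have hs : star (cos θ • (1 : B) + sin θ • J) = cos θ • 1 - sin θ • J := by
    rw [star_add, star_smul, star_smul, star_one, hJ, star_trivial, star_trivial, smul_neg,
      sub_eq_add_neg]
  rw [Unitary.mem_iff, hs]
  constructor <;>
  · simp only [sub_mul, add_mul, mul_sub, mul_add, smul_mul_smul_comm, one_mul, mul_one, hJJ,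
      smul_neg]
    match_scalars
    · linear_combination cos_sq_add_sin_sq θ
    · ring

namespace CStarMatrix

variable {A : Type*} [CStarAlgebra A]

section

variable {n : Type*}

lemma star_ofMatrix_single [DecidableEq n] (i j : n) (x : A) :
    star (ofMatrix (single i j x) : CStarMatrix n n A) = ofMatrix (single j i (star x)) :=
  congrArg ofMatrix (conjTranspose_single i j x)

variable [Fintype n]

lemma toCLM_conjTranspose_equiv_symm_star (M : Matrix n n A) (v : n → A) :
    toCLM (ofMatrix Mᴴ) ((equiv A (n → A)).symm (star v)) =
      (equiv A (n → A)).symm (star (M *ᵥ v)) := by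
  rw [toCLM_apply, star_mulVec]
  rfl

variable [DecidableEq n]

lemma one_add_single_mul_one_add_single (i : n) (x y : A) :
    (1 + ofMatrix (single i i x) : CStarMatrix n n A) * (1 + ofMatrix (single i i y)) =
      1 + ofMatrix (single i i (x + y + x * y)) := by
  change ((1 + single i i x) * (1 + single i i y) : Matrix n n A) =
    1 + single i i (x + y + x * y)
  rw [single_add, single_add, ← single_mul_single_same (c := x) i i i y]
  noncomm_ring

lemma toCLM_ofMatrix_single (i j : n) (a : A) (v : C⋆ᵐᵒᵈ(A, n → A)) :
    toCLM (ofMatrix (single i j a) : CStarMatrix n n A) v =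
      (equiv A (n → A)).symm (Pi.single j (v i * a)) := by
  ext k
  rw [toCLM_apply_eq_sum]
  by_cases h : k = j
  · subst h; simp [single_apply]
  · simp [single_apply, h, Ne.symm h]

variable [PartialOrder A] [StarOrderedRing A]

lemma norm_ofMatrix_single (i j : n) (a : A) :
    ‖(ofMatrix (single i j a) : CStarMatrix n n A)‖ = ‖a‖ := by
  have h_entry : ‖a‖ ≤ ‖(ofMatrix (single i j a) : CStarMatrix n n A)‖ := by
    simpa using norm_entry_le_norm (M := ofMatrix (single i j a)) (i := i) (j := j)
  refine le_antisymm ?_ h_entry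
  rw [CStarMatrix.norm_def]
  apply ContinuousLinearMap.opNorm_le_bound _ (norm_nonneg a)
  intro v
  rw [toCLM_ofMatrix_single, norm_single, mul_comm]
  exact (norm_mul_le _ _).trans (by gcongr; exact norm_apply_le_norm v i)

lemma isAlmostUnitary_one_add_single_sub_one {δ : ℝ} {a : A} (i : n)
    (ha : IsAlmostUnitary δ a) :
    IsAlmostUnitary δ (1 + ofMatrix (single i i (a - 1)) : CStarMatrix n n A) := by
  have hstar (x : A) : star (1 + ofMatrix (single i i (x - 1)) : CStarMatrix n n A) =
      1 + ofMatrix (single i i (star x - 1)) := by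
    rw [star_add, star_one, star_ofMatrix_single, star_sub, star_one]
  have key (x : A) : star (1 + ofMatrix (single i i (x - 1)) : CStarMatrix n n A) *
      (1 + ofMatrix (single i i (x - 1))) - 1 = ofMatrix (single i i (star x * x - 1)) := by
    rw [hstar, one_add_single_mul_one_add_single, add_sub_cancel_left]
    congr 2
    noncomm_ring
  have hM : (1 + ofMatrix (single i i (a - 1)) : CStarMatrix n n A) =
      star (1 + ofMatrix (single i i (star a - 1))) := by
    rw [hstar, star_star]
  refine ⟨?_, ?_⟩
  · rw [key, norm_ofMatrix_single]
    exact ha.1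
  · rw [hM, star_star, key, norm_ofMatrix_single, star_star]
    exact ha.2

lemma isAlmostUnitary_one_add_smul_single {δ s : ℝ} {y : A} (hy : IsSelfAdjoint y)
    (hyδ : ‖y‖ < δ) (hs : |s| ≤ 1) (i : n) :
    IsAlmostUnitary (δ + δ + δ * δ)
      (1 + s • ofMatrix (single i i y) : CStarMatrix n n A) := by
  have hsy : s • (ofMatrix (single i i y) : CStarMatrix n n A) =
      ofMatrix (single i i (s • y)) := by
    rw [← smul_single]; rfl
  rw [hsy]
  refine IsSelfAdjoint.isAlmostUnitary_one_add ?_ ?_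
  · rw [IsSelfAdjoint, star_ofMatrix_single, ((IsSelfAdjoint.all s).smul hy).star_eq]
  · rw [norm_ofMatrix_single, norm_smul, Real.norm_eq_abs]
    exact (mul_le_of_le_one_left (norm_nonneg y) hs).trans_lt hyδ

end

def quarterTurn : CStarMatrix (Fin 2) (Fin 2) A := ofMatrix !![0, -1; 1, 0]

lemma star_quarterTurn : star (quarterTurn : CStarMatrix (Fin 2) (Fin 2) A) = -quarterTurn := by
  ext i j; fin_cases i <;> fin_cases j <;> simp [quarterTurn, star_apply]

lemma quarterTurn_mul_self :
    (quarterTurn : CStarMatrix (Fin 2) (Fin 2) A) * quarterTurn = -1 := by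
  ext i j; fin_cases i <;> fin_cases j <;> simp [quarterTurn, mul_apply, Fin.sum_univ_two]

lemma quarterTurn_mul_one_add_single_mul_star (x : A) :
    quarterTurn * (1 + ofMatrix (single 0 0 x)) * star quarterTurn =
      1 + ofMatrix (single 1 1 x) := by
  ext i j; fin_cases i <;> fin_cases j <;>
    simp [quarterTurn, mul_apply, Fin.sum_univ_two, star_apply, single_apply, one_apply]

noncomputable def rotation (θ : ℝ) : CStarMatrix (Fin 2) (Fin 2) A :=
  cos θ • 1 + sin θ • quarterTurn

lemma rotation_mem_unitary (θ : ℝ) :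
    (rotation θ : CStarMatrix (Fin 2) (Fin 2) A) ∈ unitary _ :=
  cos_smul_one_add_sin_smul_mem_unitary star_quarterTurn quarterTurn_mul_self θ

lemma rotation_pi_div_two :
    (rotation (π / 2) : CStarMatrix (Fin 2) (Fin 2) A) = quarterTurn := by
  simp [rotation]

@[fun_prop]
lemma continuous_rotation : Continuous (rotation : ℝ → CStarMatrix (Fin 2) (Fin 2) A) := by
  unfold rotation; fun_prop

noncomputable def rotationPath (u : A) (t : ℝ) : CStarMatrix (Fin 2) (Fin 2) A :=
  rotation (π / 2 * t) * (1 + ofMatrix (single 0 0 (u - 1))) * star (rotation (π / 2 * t)) *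
    (1 + ofMatrix (single 1 1 (star u - 1)))

lemma rotationPath_zero (u : A) : rotationPath u 0 = ofMatrix !![u, 0; 0, star u] := by
  ext i j; fin_cases i <;> fin_cases j <;>
    simp [rotationPath, rotation, mul_apply, Fin.sum_univ_two, one_apply, single_apply]

lemma rotationPath_one (u : A) :
    rotationPath u 1 = 1 + ofMatrix (single 1 1 (u * star u - 1)) := by
  rw [rotationPath, mul_one, rotation_pi_div_two, quarterTurn_mul_one_add_single_mul_star,
    one_add_single_mul_one_add_single]
  congr 3
  noncomm_ring

variable [PartialOrder A] [StarOrderedRing A]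

lemma continuous_rotationPath (u : A) : Continuous (rotationPath u) := by
  unfold rotationPath; fun_prop

lemma isAlmostUnitary_rotationPath {δ : ℝ} {u : A} (hu : IsAlmostUnitary δ u) (t : ℝ) :
    IsAlmostUnitary (δ + δ + δ * δ) (rotationPath u t) :=
  ((isAlmostUnitary_one_add_single_sub_one 0 hu).unitary_conj (rotation_mem_unitary _)).mul
    (isAlmostUnitary_one_add_single_sub_one 1 hu.star)

lemma exists_path_isAlmostUnitary {δ : ℝ} {u : A} (hu : IsAlmostUnitary δ u) :
    ∃ γ : Path (ofMatrix !![u, 0; 0, star u] : CStarMatrix (Fin 2) (Fin 2) A) 1,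
      ∀ t, IsAlmostUnitary (δ + δ + δ * δ) (γ t) := by
  let Y : CStarMatrix (Fin 2) (Fin 2) A := ofMatrix (single 1 1 (u * star u - 1))
  let segment (t : ℝ) : CStarMatrix (Fin 2) (Fin 2) A := 1 + (1 - t) • Y
  have hsegment : Continuous segment := by fun_prop
  let γ₁ := Path.ofLine (continuous_rotationPath u).continuousOn (rotationPath_zero u)
    (rotationPath_one u)
  let γ₂ : Path (1 + Y) 1 :=
    Path.ofLine hsegment.continuousOn (by simp [segment]) (by simp [segment])
  refine ⟨γ₁.trans γ₂, fun t => ?_⟩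
  rcases Path.trans_range γ₁ γ₂ ▸ Set.mem_range_self t with ⟨s, hs⟩ | ⟨s, hs⟩
  · obtain ⟨r, -, hr⟩ := Path.ofLine_mem (continuous_rotationPath u).continuousOn _ _ s
    rw [← hs, ← hr]
    exact isAlmostUnitary_rotationPath hu r
  · obtain ⟨r, ⟨hr0, hr1⟩, hr⟩ := Path.ofLine_mem hsegment.continuousOn _ _ s
    rw [← hs, ← hr]
    exact isAlmostUnitary_one_add_smul_single ((IsSelfAdjoint.mul_star_self u).sub (.one A))
      hu.2 (abs_le.2 ⟨by linarith, by linarith⟩) 1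

end CStarMatrix

lemma WithCStarModule.norm_equiv_symm_star {A : Type*} [CStarAlgebra A] [PartialOrder A]
    [StarOrderedRing A] {n : Type*} [Fintype n] (v : n → A) :
    ‖(equiv A (n → A)).symm (star v)‖ = √‖∑ i, star (v i) * v i‖ := by
  simp [pi_norm, inner_def]

/- `CStarMatrix` acts on row vectors from the right, `m2CStarNorm` on column vectors from
the left; `v ↦ star v` intertwines the action of `M` on the latter with that of `Mᴴ` on the
former. -/
lemma m2CStarNorm_eq_norm {A : Type*} [CStarAlgebra A] [PartialOrder A] [StarOrderedRing A]
    (M : Matrix (Fin 2) (Fin 2) A) : m2CStarNorm M = ‖ofMatrix M‖ := by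
  have hball : (fun v : Fin 2 → A => (equiv A (Fin 2 → A)).symm (star v)) ''
      {v | ‖∑ i, star (v i) * v i‖ ≤ 1} = Metric.closedBall 0 1 := by
    ext x
    simp only [Set.mem_image, Set.mem_ofPred_eq, mem_closedBall_zero_iff]
    constructor
    · rintro ⟨v, hv, rfl⟩
      rw [norm_equiv_symm_star]
      exact Real.sqrt_le_one.mpr hv
    · intro hx
      refine ⟨star (equiv A _ x), ?_, by simp⟩
      rw [← Real.sqrt_le_one, ← norm_equiv_symm_star]
      simpa using hx
  have hf (v : Fin 2 → A) : √‖∑ i, star ((M *ᵥ v) i) * (M *ᵥ v) i‖ =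
      ‖toCLM (ofMatrix Mᴴ) ((equiv A (Fin 2 → A)).symm (star v))‖ := by
    rw [toCLM_conjTranspose_equiv_symm_star, norm_equiv_symm_star]
  rw [m2CStarNorm, ← norm_star, CStarMatrix.star_eq_conjTranspose, CStarMatrix.norm_def,
    ← ContinuousLinearMap.sSup_unitClosedBall_eq_norm, ← hball, Set.image_image]
  simp only [hf]
  rfl

theorem stmt9_general {A : Type*} [CStarAlgebra A] (ε : ℝ) (hε1 : ε < 1/3)
    (u : A) (h1 : ‖star u * u - 1‖ < ε) (h2 : ‖u * star u - 1‖ < ε) :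
    ∃ w : ℝ → Matrix (Fin 2) (Fin 2) A,
      (∀ i j, Continuous fun t => w t i j) ∧
      w 0 = !![u, 0; 0, star u] ∧
      w 1 = 1 ∧
      ∀ t ∈ Set.Icc (0 : ℝ) 1,
        m2CStarNorm (star (w t) * w t - 1) < 3 * ε ∧
        m2CStarNorm (w t * star (w t) - 1) < 3 * ε := by
  -- the norm of `CStarMatrix` is set up relative to an order on `A`: take the spectral one
  let := CStarAlgebra.spectralOrder A
  let := CStarAlgebra.spectralOrderedRing A
  obtain ⟨γ, hγ⟩ := exists_path_isAlmostUnitary (⟨h1, h2⟩ : IsAlmostUnitary ε u)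
  have hε : ε + ε + ε * ε < 3 * ε := by nlinarith [(norm_nonneg _).trans_lt h1]
  refine ⟨fun t => ofMatrix.symm (γ.extend t), fun i j => ?_, by simp,
    congrArg ofMatrix.symm γ.extend_one, fun t _ => ?_⟩
  · exact (continuous_apply j).comp ((continuous_apply i).comp γ.continuous_extend)
  · rw [m2CStarNorm_eq_norm, m2CStarNorm_eq_norm]
    exact ⟨(hγ _).1.trans hε, (hγ _).2.trans hε⟩

/-- For an ε-unitary u (ε < 1/3) in a unital C*-algebra A, the diagonal matrix
diag(u, u*) in M₂(A) is connected to the identity by a norm-continuous path of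
3ε-unitaries of M₂(A). -/
theorem stmt9 {A : Type*} [CStarAlgebra A] (ε : ℝ) (hε0 : 0 < ε) (hε1 : ε < 1/3)
    (u : A) (h1 : ‖star u * u - 1‖ < ε) (h2 : ‖u * star u - 1‖ < ε) :
    ∃ w : ℝ → Matrix (Fin 2) (Fin 2) A,
      (∀ i j, Continuous fun t => w t i j) ∧
      w 0 = !![u, 0; 0, star u] ∧
      w 1 = 1 ∧
      ∀ t ∈ Set.Icc (0 : ℝ) 1,
        m2CStarNorm (star (w t) * w t - 1) < 3 * ε ∧
        m2CStarNorm (w t * star (w t) - 1) < 3 * ε :=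
  stmt9_general ε hε1 u h1 h2
end

section
/- Let A be a unital C*-algebra, let 0 < ε < 1/4, and let u ∈ A with ‖u*u − 1‖ < ε and ‖uu* − 1‖ < ε. Then u*u is invertible and positive, the element κ₁(u) := u·(u*u)^{−1/2} is a unitary in A, and ‖u − κ₁(u)‖ < ε. -/
/-!
Both `u⋆u` and `uu⋆` lie within distance `1` of `1`, so they are invertible, hence so is `u`.
With `a = u⋆u` strictly positive, `v = u a^{-1/2}` satisfies `v⋆v = a^{-1/2} a a^{-1/2} = 1` and
is invertible, hence unitary. Then `u - v = v (v⋆u - 1) = v (a^{1/2} - 1)`, and since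
`|√x - 1| ≤ |x - 1|` for `x ≥ 0`, the functional calculus gives `‖a^{1/2} - 1‖ ≤ ‖a - 1‖ < ε`.
-/

theorem isUnit_of_norm_sub_one_lt_one {R : Type*} [NormedRing R] [HasSummableGeomSeries R]
    {x : R} (h : ‖x - 1‖ < 1) : IsUnit x := by
  simpa using isUnit_one_sub_of_norm_lt_one (x := 1 - x) (by rwa [norm_sub_rev])

theorem isUnit_of_isUnit_mul_of_isUnit_mul_swap {M : Type*} [Monoid M] {a b : M}
    (hab : IsUnit (a * b)) (hba : IsUnit (b * a)) : IsUnit a := by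
  obtain ⟨c, hc, -⟩ := isUnit_iff_exists.mp hab
  obtain ⟨d, -, hd⟩ := isUnit_iff_exists.mp hba
  exact isUnit_iff_exists_and_exists.mpr
    ⟨⟨b * c, by rw [← mul_assoc, hc]⟩, ⟨d * b, by rw [mul_assoc, hd]⟩⟩

theorem Real.abs_sqrt_sub_one_le {x : ℝ} (hx : 0 ≤ x) : |√x - 1| ≤ |x - 1| := by
  have hsq : x - 1 = (√x - 1) * (√x + 1) := by
    linear_combination (sq_sqrt hx).symm
  rw [hsq, abs_mul, abs_of_nonneg (by positivity : 0 ≤ √x + 1)]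
  exact le_mul_of_one_le_right (abs_nonneg _) (by linarith [sqrt_nonneg x])

namespace CFC

variable {A : Type*} [CStarAlgebra A] [PartialOrder A] [StarOrderedRing A]

theorem norm_sqrt_sub_one_le {a : A} (ha : 0 ≤ a) : ‖sqrt a - 1‖ ≤ ‖a - 1‖ := by
  have hsqrt : sqrt a - 1 = cfc (fun x : ℝ => √x - 1) a := by
    rw [sqrt_eq_real_sqrt a, cfcₙ_eq_cfc, cfc_sub _ _ a, cfc_const_one ℝ a]
  have hsub : a - 1 = cfc (fun x : ℝ => x - 1) a := by
    rw [cfc_sub _ _ a, cfc_id' ℝ a, cfc_const_one ℝ a]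
  rw [hsqrt]
  refine norm_cfc_le (norm_nonneg _) fun x hx => ?_
  calc ‖√x - 1‖ ≤ ‖x - 1‖ := Real.abs_sqrt_sub_one_le (spectrum_nonneg_of_nonneg ha hx)
    _ ≤ ‖a - 1‖ := hsub ▸ norm_apply_le_norm_cfc (fun x : ℝ => x - 1) a hx

theorem rpow_neg_half_mul_self_mul_rpow_neg_half {a : A} (ha : IsStrictlyPositive a) :
    a ^ (-(1/2) : ℝ) * a * a ^ (-(1/2) : ℝ) = 1 := by
  calc a ^ (-(1/2) : ℝ) * a * a ^ (-(1/2) : ℝ)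
      = a ^ (-(1/2) : ℝ) * a ^ (1 : ℝ) * a ^ (-(1/2) : ℝ) := by rw [rpow_one a]
    _ = a ^ ((-(1/2) : ℝ) + 1 + -(1/2)) := by rw [rpow_add ha.isUnit, rpow_add ha.isUnit]
    _ = 1 := by norm_num [rpow_zero a]

theorem mul_rpow_neg_half_mem_unitary {u : A} (hu : IsUnit u) :
    u * (star u * u) ^ (-(1/2) : ℝ) ∈ unitary A := by
  have ha : IsStrictlyPositive (star u * u) :=
    CStarAlgebra.isStrictlyPositive_iff_eq_star_mul_self.mpr ⟨u, hu, rfl⟩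
  refine (hu.mul (IsStrictlyPositive.rpow _ (-(1/2)) ha).isUnit).mem_unitary_of_star_mul_self ?_
  rw [star_mul, (rpow_nonneg).isSelfAdjoint.star_eq, mul_assoc, ← mul_assoc (star u)]
  simpa only [mul_assoc] using rpow_neg_half_mul_self_mul_rpow_neg_half ha

theorem norm_sub_mul_rpow_neg_half_le {u : A} (hu : IsUnit u) :
    ‖u - u * (star u * u) ^ (-(1/2) : ℝ)‖ ≤ ‖star u * u - 1‖ := by
  set a := star u * u
  set v := u * a ^ (-(1/2) : ℝ)
  have hv : v ∈ unitary A := mul_rpow_neg_half_mem_unitary hu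
  have ha : IsUnit a := hu.star.mul hu
  have hvu : star v * u = sqrt a := by
    calc star v * u = a ^ (-(1/2) : ℝ) * a ^ (1 : ℝ) := by
          rw [star_mul, (rpow_nonneg).isSelfAdjoint.star_eq, mul_assoc, rpow_one a]
      _ = sqrt a := by rw [← rpow_add ha, sqrt_eq_rpow]; norm_num
  have hdiff : u - v = v * (sqrt a - 1) := by
    rw [mul_sub, mul_one, ← hvu, ← mul_assoc, Unitary.mul_star_self_of_mem hv, one_mul]
  rw [hdiff, CStarRing.norm_mem_unitary_mul _ hv]
  exact norm_sqrt_sub_one_le (star_mul_self_nonneg u)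

end CFC

theorem stmt10_general {A : Type*} [CStarAlgebra A] [PartialOrder A] [StarOrderedRing A]
    (ε : ℝ) (hε1 : ε < 1/4)
    (u : A) (h1 : ‖star u * u - 1‖ < ε) (h2 : ‖u * star u - 1‖ < ε) :
    IsUnit (star u * u) ∧ 0 ≤ star u * u ∧
    u * cfc (fun x : ℝ => x ^ (-(1/2) : ℝ)) (star u * u) ∈ unitary A ∧
    ‖u - u * cfc (fun x : ℝ => x ^ (-(1/2) : ℝ)) (star u * u)‖ < ε := by
  have hu : IsUnit u := isUnit_of_isUnit_mul_of_isUnit_mul_swap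
    (isUnit_of_norm_sub_one_lt_one (by linarith : ‖u * star u - 1‖ < 1))
    (isUnit_of_norm_sub_one_lt_one (by linarith : ‖star u * u - 1‖ < 1))
  have ha : 0 ≤ star u * u := star_mul_self_nonneg u
  rw [← CFC.rpow_eq_cfc_real ha]
  exact ⟨hu.star.mul hu, ha, CFC.mul_rpow_neg_half_mem_unitary hu,
    (CFC.norm_sub_mul_rpow_neg_half_le hu).trans_lt h1⟩

/-- For an ε-unitary u (ε < 1/4) in a unital C*-algebra, u*u is invertible and
positive, the polar part κ₁(u) = u·(u*u)^{−1/2} is a unitary, and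
‖u − κ₁(u)‖ < ε. -/
theorem stmt10 {A : Type*} [CStarAlgebra A] [PartialOrder A] [StarOrderedRing A]
    (ε : ℝ) (hε0 : 0 < ε) (hε1 : ε < 1/4)
    (u : A) (h1 : ‖star u * u - 1‖ < ε) (h2 : ‖u * star u - 1‖ < ε) :
    IsUnit (star u * u) ∧ 0 ≤ star u * u ∧
    u * cfc (fun x : ℝ => x ^ (-(1/2) : ℝ)) (star u * u) ∈ unitary A ∧
    ‖u - u * cfc (fun x : ℝ => x ^ (-(1/2) : ℝ)) (star u * u)‖ < ε :=
  stmt10_general ε hε1 u h1 h2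
end
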